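/- arXiv:math/0210077 — 3 statements merged into one kernel-verified Lean document; each statement's English description precedes it below -/
import Mathlib

section
/- Let S = k[x_1,...,x_n] be a polynomial ring over a field k, I a homogeneous ideal, and z_1,...,z_{t+1} a sequence of homogeneous elements. For i ≤ t define a^i_z(S/I) = sup{ r : [(I,z_1,...,z_i):z_{i+1}]_r ≠ (I,z_1,...,z_i)_r }. Then a^i_z(S/I) equals max{ r : [⋃_{m≥1} (I,z_1,...,z_i):z_{i+1}^m]_r ≠ (I,z_1,...,z_i)_r }. -/
open MvPolynomial

noncomputable section

/-- Coercion of a natural number into `WithBot ℕ∞` (degrees, with `⊥ = -∞`, `⊤ = ∞`). -/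
def natW (r : ℕ) : WithBot ℕ∞ := ((r : ℕ∞) : WithBot ℕ∞)

/-- The total degree `|a|` of an exponent vector. -/
def degOf {n : ℕ} (a : Fin n →₀ ℕ) : ℕ := a.sum fun _ e => e

variable {k : Type*} [Field k] {n : ℕ}

/-- The top degree in which the graded pieces of two ideals differ
(`⊥` if they never differ, `⊤` if they differ in unboundedly many degrees). -/
def topDiff (I J : Ideal (MvPolynomial (Fin n) k)) : WithBot ℕ∞ :=
  sSup {x | ∃ r : ℕ, x = natW r ∧
    ¬ ∀ f : MvPolynomial (Fin n) k, f.IsHomogeneous r → (f ∈ I ↔ f ∈ J)}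

/-- `I` is a homogeneous (graded) ideal. -/
def HomogIdeal (I : Ideal (MvPolynomial (Fin n) k)) : Prop :=
  ∀ f ∈ I, ∀ r : ℕ, homogeneousComponent r f ∈ I

/-- The maximal homogeneous ideal `𝔪 = (x₁, …, xₙ)`. -/
def maxIdl (k : Type*) [Field k] (n : ℕ) : Ideal (MvPolynomial (Fin n) k) :=
  Ideal.span (Set.range X)

/-- The ideal `(I, z₁, …, z_i)`. -/
def partIdeal (I : Ideal (MvPolynomial (Fin n) k)) {m : ℕ}
    (z : Fin m → MvPolynomial (Fin n) k) (i : ℕ) : Ideal (MvPolynomial (Fin n) k) :=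
  I ⊔ Ideal.span (z '' {j : Fin m | (j : ℕ) < i})

/-- `a_z^i(S/I) = sup { r : [(I,z₁,…,z_i) : z_{i+1}]_r ≠ (I,z₁,…,z_i)_r }`. -/
def aInv (I : Ideal (MvPolynomial (Fin n) k)) {m : ℕ}
    (z : Fin m → MvPolynomial (Fin n) k) (i : Fin m) : WithBot ℕ∞ :=
  topDiff ((partIdeal I z (i : ℕ)).colon (Ideal.span {z i})) (partIdeal I z (i : ℕ))

/-- `z` is a filter-regular sequence for `S/I`: each `z_{i+1}` avoids every associated
prime of `(I,z₁,…,z_i)` other than the maximal homogeneous ideal. -/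
def FilterRegular (I : Ideal (MvPolynomial (Fin n) k)) {m : ℕ}
    (z : Fin m → MvPolynomial (Fin n) k) : Prop :=
  ∀ i : Fin m, ∀ p : Ideal (MvPolynomial (Fin n) k),
    IsAssociatedPrime p (MvPolynomial (Fin n) k ⧸ partIdeal I z (i : ℕ)) →
    p ≠ maxIdl k n → z i ∉ p

/-- The saturation `⋃_{m ≥ 1} (J : z^m)`. -/
def satIdeal (J : Ideal (MvPolynomial (Fin n) k)) (z : MvPolynomial (Fin n) k) :
    Ideal (MvPolynomial (Fin n) k) :=
  ⨆ m : ℕ, J.colon (Ideal.span {z ^ (m + 1)})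

/-- `a <_drevlex b` for the degree reverse lexicographic order with `x₁ > x₂ > … > xₙ`. -/
def RevLexLT {n : ℕ} (a b : Fin n →₀ ℕ) : Prop :=
  degOf a < degOf b ∨
    (degOf a = degOf b ∧ ∃ j : Fin n, b j < a j ∧ ∀ l : Fin n, j < l → a l = b l)

/-- The initial ideal of `I` with respect to the reverse lexicographic order:
the ideal generated by the leading monomials of the nonzero elements of `I`. -/
def initialIdeal (I : Ideal (MvPolynomial (Fin n) k)) : Ideal (MvPolynomial (Fin n) k) :=
  Ideal.span {g | ∃ f ∈ I, f ≠ 0 ∧ ∃ μ ∈ f.support,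
    (∀ ν ∈ f.support, ν = μ ∨ RevLexLT ν μ) ∧ g = monomial μ (1 : k)}

/-- The evaluation `x_{n-i+1} = ⋯ = x_n = 0`. -/
def evalZero (k : Type*) [Field k] (n i : ℕ) :
    MvPolynomial (Fin n) k →ₐ[k] MvPolynomial (Fin n) k :=
  aeval fun j : Fin n => if (j : ℕ) < n - i then X j else 0

/-- The evaluation `x_{n-i+1} = ⋯ = x_n = 0`, `x_{n-i} = 1`. -/
def evalOne (k : Type*) [Field k] (n i : ℕ) :
    MvPolynomial (Fin n) k →ₐ[k] MvPolynomial (Fin n) k :=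
  aeval fun j : Fin n =>
    if (j : ℕ) < n - i - 1 then X j else if (j : ℕ) = n - i - 1 then 1 else 0

/-- `J_i`: the ideal obtained from `In(I)` by evaluating `x_{n-i+1} = ⋯ = x_n = 0`. -/
def Jlow (i : ℕ) (I : Ideal (MvPolynomial (Fin n) k)) : Ideal (MvPolynomial (Fin n) k) :=
  Ideal.map (evalZero k n i) (initialIdeal I)

/-- `J̃_i`: the ideal obtained from `J_i` by the further evaluation `x_{n-i} = 1`. -/
def Jtil (i : ℕ) (I : Ideal (MvPolynomial (Fin n) k)) : Ideal (MvPolynomial (Fin n) k) :=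
  Ideal.map (evalOne k n i) (initialIdeal I)

/-- `c_i(I) = sup { r : (J̃_i/J_i)_r ≠ 0 }`, computed in `S_i = k[x₁,…,x_{n-i}]`. -/
def cInv (i : ℕ) (I : Ideal (MvPolynomial (Fin n) k)) : WithBot ℕ∞ :=
  sSup {x | ∃ r : ℕ, x = natW r ∧ ∃ f : MvPolynomial (Fin n) k,
    f ∈ Jtil i I ∧ f ∈ supported k {j : Fin n | (j : ℕ) < n - i} ∧
    f.IsHomogeneous r ∧ f ∉ Jlow i I}

/-- `r(I) = sup { r : (S_d/J_d)_r ≠ 0 }`. -/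
def rInv (d : ℕ) (I : Ideal (MvPolynomial (Fin n) k)) : WithBot ℕ∞ :=
  sSup {x | ∃ r : ℕ, x = natW r ∧ ∃ f : MvPolynomial (Fin n) k,
    f ∈ supported k {j : Fin n | (j : ℕ) < n - d} ∧ f.IsHomogeneous r ∧ f ∉ Jlow d I}

/-- The partial regularity `reg_t(S/I)`, via its characterization
`reg_t(S/I) = max_i a_z^i(S/I)` for any filter-regular sequence `z` of `t+1` linear forms
([T1, Proposition 2.2]; equal to `max { aᵢ(S/I) + i : i ≤ t }` in terms of local cohomology). -/
def regT (t : ℕ) (I : Ideal (MvPolynomial (Fin n) k)) : WithBot ℕ∞ :=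
  sSup {x | ∃ z : Fin (t + 1) → MvPolynomial (Fin n) k,
    (∀ j, (z j).IsHomogeneous 1) ∧ FilterRegular I z ∧
    x = ⨆ i : Fin (t + 1), aInv I z i}

/-- The Castelnuovo–Mumford regularity `reg(S/I)`, via its characterization
`reg(S/I) = max { a_z^0, …, a_z^{d-1}, r_z(S/I) }` for any filter-regular sequence `z`
of `d = dim S/I` linear forms ([BS, Theorem 1.10], [T1, Corollary 3.3]). -/
def regCM (I : Ideal (MvPolynomial (Fin n) k)) : WithBot ℕ∞ :=
  sSup {x | ∃ d : ℕ, ringKrullDim (MvPolynomial (Fin n) k ⧸ I) = natW d ∧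
    ∃ z : Fin d → MvPolynomial (Fin n) k,
      (∀ j, (z j).IsHomogeneous 1) ∧ FilterRegular I z ∧
      x = (⨆ i : Fin d, aInv I z i) ⊔ topDiff ⊤ (I ⊔ Ideal.span (Set.range z))}

/-- The exponent vectors of the minimal monomial generators of a monomial ideal. -/
def minGens (I : Ideal (MvPolynomial (Fin n) k)) : Set (Fin n →₀ ℕ) :=
  {μ | monomial μ (1 : k) ∈ I ∧
    ∀ ν : Fin n →₀ ℕ, monomial ν (1 : k) ∈ I → ν ≤ μ → ν = μ}

/-- `E_i`: the exponent vectors of the minimal generators of `In(I)` involving none of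
the variables `x_{n-i+1}, …, x_n`. -/
def Evar (i : ℕ) (I : Ideal (MvPolynomial (Fin n) k)) : Set (Fin n →₀ ℕ) :=
  {μ ∈ minGens (initialIdeal I) | ∀ j : Fin n, n - i ≤ (j : ℕ) → μ j = 0}

/-- The set `F` of corners of the staircase determined by `E`:
vectors `a = max(v₁,…,v_s) - (1,…,1)` where `v j ∈ E`, the `j`-th coordinate of `v j`
strictly exceeds that of `v h` for `h ≠ j`, and `a ≱ w` for all `w ∈ E`. -/
def corners {s : ℕ} (E : Set (Fin s →₀ ℕ)) : Set (Fin s →₀ ℕ) :=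
  {a | (∃ v : Fin s → (Fin s →₀ ℕ), (∀ j, v j ∈ E) ∧
      (∀ j h : Fin s, h ≠ j → v h j < v j j) ∧
      ∀ l : Fin s, a l + 1 = Finset.univ.sup fun j => v j l) ∧
    ∀ w ∈ E, ¬ w ≤ a}

/-- Lemma 2.2: for a sequence of homogeneous elements of positive degree,
`a_z^i(S/I) = max { r : [⋃_{m≥1} (I,z₁,…,z_i) : z_{i+1}^m]_r ≠ (I,z₁,…,z_i)_r }`. -/
theorem stmt_0 {k : Type*} [Field k] {n : ℕ} (I : Ideal (MvPolynomial (Fin n) k))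
    (hI : HomogIdeal I) {t : ℕ} (z : Fin (t + 1) → MvPolynomial (Fin n) k)
    (hz : ∀ j, ∃ r : ℕ, 0 < r ∧ (z j).IsHomogeneous r) (i : Fin (t + 1)) :
    aInv I z i =
      topDiff (satIdeal (partIdeal I z (i : ℕ)) (z i)) (partIdeal I z (i : ℕ)) := by
  classical
  obtain ⟨d, -, hzd⟩ := hz i
  set J := partIdeal I z (i : ℕ) with hJ
  have hmono : Monotone (fun m : ℕ => J.colon (Ideal.span {(z i) ^ (m + 1)})) := by
    intro a b hab x hx
    rw [Ideal.mem_colon_span_singleton] at hx ⊢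
    have h2 : a + 1 + (b - a) = b + 1 := by omega
    have : x * z i ^ (b + 1) = x * z i ^ (a + 1) * z i ^ (b - a) := by
      rw [mul_assoc, ← pow_add, h2]
    rw [this]; exact Ideal.mul_mem_right _ _ hx
  have hsat : ∀ f, f ∈ satIdeal J (z i) ↔ ∃ m : ℕ, f * (z i) ^ (m + 1) ∈ J := by
    intro f
    rw [satIdeal, Submodule.mem_iSup_of_directed _ hmono.directed_le]
    simp only [Ideal.mem_colon_span_singleton]
  have hJsat : J ≤ satIdeal J (z i) := fun a ha =>
    (hsat a).2 ⟨0, by rw [pow_one]; exact Ideal.mul_mem_right _ _ ha⟩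
  unfold aInv topDiff
  apply le_antisymm
  · apply sSup_le_sSup
    rintro x ⟨r, rfl, hx⟩
    refine ⟨r, rfl, fun h => hx fun f hf => ?_⟩
    have h1 := h f hf
    constructor
    · intro hmem
      refine h1.1 ((hsat f).2 ⟨0, ?_⟩)
      rw [pow_one]
      exact Ideal.mem_colon_span_singleton.1 hmem
    · intro hmem
      rw [Ideal.mem_colon_span_singleton]
      exact Ideal.mul_mem_right _ _ hmem
  · apply sSup_le
    rintro x ⟨r, rfl, hx⟩
    push_neg at hx
    obtain ⟨f, hf, hiff⟩ := hx
    obtain ⟨hfsat, hfJ⟩ := hiff.resolve_right fun h => h.1 (hJsat h.2)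
    obtain ⟨m, hm⟩ := (hsat f).1 hfsat
    have hex : ∃ N, f * (z i) ^ N ∈ J := ⟨m + 1, hm⟩
    set M := Nat.find hex with hM
    have hMmem : f * (z i) ^ M ∈ J := Nat.find_spec hex
    have hMpos : 0 < M := by
      rcases Nat.eq_zero_or_pos M with h0 | h
      · exfalso; apply hfJ
        have := hMmem; rw [h0, pow_zero, mul_one] at this; exact this
      · exact h
    set g := f * (z i) ^ (M - 1) with hg
    have hgJ : g ∉ J := fun hc => Nat.find_min hex (Nat.sub_lt hMpos one_pos) hc
    have hgc : g ∈ J.colon (Ideal.span {z i}) := by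
      rw [Ideal.mem_colon_span_singleton, hg, mul_assoc, ← pow_succ]
      rwa [Nat.sub_add_cancel hMpos]
    have hghom : g.IsHomogeneous (r + d * (M - 1)) := hf.mul (hzd.pow _)
    refine le_trans ?_ (le_sSup ⟨r + d * (M - 1), rfl, fun h => hgJ ((h g hghom).1 hgc)⟩)
    simp only [natW]
    exact_mod_cast Nat.le_add_right r _
end
end

section
/- Let I ⊂ S = k[x_1,...,x_n] be a homogeneous ideal and In(I) its initial ideal with respect to the reverse lexicographic order with x_1 > ... > x_n. For i ≥ 0 let J_i ⊂ S_i = k[x_1,...,x_{n-i}] be obtained from In(I) by setting x_{n-i+1} = ... = x_n = 0, and let Ĵ_i be obtained from J_i by setting x_{n-i} = 1 (viewed as an ideal of S_i containing J_i). Then for z = x_n,...,x_{n-t} and each i ≤ t, a^i_z(S/I) = c_i(I), where c_i(I) = sup{ r : (Ĵ_i/J_i)_r ≠ 0 }. -/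
open MvPolynomial

noncomputable section

variable {k : Type*} [Field k] {n : ℕ}

/-! By Bayer–Stillman, for the revlex order the initial ideal of `P = (I, x_n, …, x_{n-i+1})` is
`In(I) + (x_n, …, x_{n-i+1})`, and `x_{n-i}` is the last variable modulo it: a homogeneous
element of `P` whose leading monomial contains `x_{n-i}` is divisible by `x_{n-i}` up to an
element of `(x_n, …, x_{n-i+1})`. Hence `(P : x_{n-i})_r ≠ P_r` iff there is a monomial `x^μ` of
degree `r` in `x_1, …, x_{n-i}` with `x^μ ∉ In(I)` and `x_{n-i} x^μ ∈ In(I)`. On the other side,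
`(J̃_i / J_i)_r ≠ 0` iff there is such an `x^μ` with `x_{n-i}^m x^μ ∈ In(I)` for some `m`; for
the least such `m`, `x_{n-i}^{m-1} x^μ` is a monomial of the first kind, of degree `≥ r`. So both
suprema agree. -/

lemma degOf_eq_degree (a : Fin n →₀ ℕ) : degOf a = a.degree := rfl

namespace RevLexLT

lemma irrefl (a : Fin n →₀ ℕ) : ¬ RevLexLT a a := by
  rintro (h | ⟨-, j, hj, -⟩) <;> omega

lemma trans {a b c : Fin n →₀ ℕ} (hab : RevLexLT a b) (hbc : RevLexLT b c) :
    RevLexLT a c := by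
  rcases hab with hab | ⟨eab, i, hi, hai⟩ <;> rcases hbc with hbc | ⟨ebc, j, hj, hbj⟩
  · exact Or.inl (hab.trans hbc)
  · exact Or.inl (ebc ▸ hab)
  · exact Or.inl (eab ▸ hbc)
  refine Or.inr ⟨eab.trans ebc, max i j, ?_, fun l hl => ?_⟩
  · rcases lt_trichotomy i j with h | rfl | h
    · have := hai j h
      rw [max_eq_right h.le]
      omega
    · simpa using hj.trans hi
    · have := hbj i h
      rw [max_eq_left h.le]
      omega
  · rw [max_lt_iff] at hl
    exact (hai l hl.1).trans (hbj l hl.2)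

lemma exists_last_ne {a b : Fin n →₀ ℕ} (hab : a ≠ b) :
    ∃ j, a j ≠ b j ∧ ∀ l, j < l → a l = b l := by
  classical
  obtain ⟨j, hj, hmax⟩ := (Finset.univ.filter fun l => a l ≠ b l).exists_max_image id
    (by simpa [Finset.filter_nonempty_iff, Finsupp.ext_iff] using hab)
  refine ⟨j, (Finset.mem_filter.mp hj).2, fun l hl => ?_⟩
  by_contra h
  exact (hmax l (by simpa using h)).not_gt hl

lemma trichotomous (a b : Fin n →₀ ℕ) (hab : ¬ RevLexLT a b) (hba : ¬ RevLexLT b a) :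
    a = b := by
  by_contra hne
  obtain ⟨j, hj, hlast⟩ := exists_last_ne hne
  rcases lt_trichotomy (degOf a) (degOf b) with hd | hd | hd
  · exact hab (Or.inl hd)
  · rcases Nat.lt_or_gt_of_ne hj with h | h
    · exact hba (Or.inr ⟨hd.symm, j, h, fun l hl => (hlast l hl).symm⟩)
    · exact hab (Or.inr ⟨hd, j, h, hlast⟩)
  · exact hba (Or.inl hd)

instance : IsStrictTotalOrder (Fin n →₀ ℕ) RevLexLT where
  irrefl := RevLexLT.irrefl
  trans _ _ _ := RevLexLT.trans
  trichotomous := trichotomous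

lemma add_right {a b : Fin n →₀ ℕ} (h : RevLexLT a b) (c : Fin n →₀ ℕ) :
    RevLexLT (a + c) (b + c) := by
  simp only [RevLexLT, degOf_eq_degree, map_add, Finsupp.add_apply] at h ⊢
  rcases h with h | ⟨e, j, hj, hlast⟩
  · exact Or.inl (by omega)
  · exact Or.inr ⟨by omega, j, by omega, fun l hl => by rw [hlast l hl]⟩

lemma of_lt {a b : Fin n →₀ ℕ} (h : a < b) : RevLexLT a b := by
  refine Or.inl ?_
  rw [degOf_eq_degree, degOf_eq_degree, ← add_tsub_cancel_of_le h.le, map_add]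
  have : (b - a).degree ≠ 0 := by
    rw [Ne, Finsupp.degree_eq_zero_iff, tsub_eq_zero_iff_le]
    exact h.not_ge
  omega

lemma wellFounded : WellFounded (RevLexLT (n := n)) := by
  refine (WellFounded.prod_lex_of_wellFoundedOn_fiber (rα := (· < ·)) (rβ := RevLexLT)
    (f := degOf) (g := id) (InvImage.wf _ wellFounded_lt) fun d => ?_).mono ?_
  · exact (Finsupp.finite_of_degree_eq d).wellFoundedOn
  · exact fun a b h => Prod.lex_def.mpr (h.imp_right fun he => ⟨he.1, h⟩)

/-- The property of revlex, beyond being a degree-compatible monomial order, that the argument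
uses. -/
lemma of_isUpperSet {s : Set (Fin n)} (hs : IsUpperSet s) {ν μ : Fin n →₀ ℕ}
    (hdeg : ν.degree = μ.degree) (hμ : ∀ l ∈ s, μ l = 0) (hν : ∃ l ∈ s, ν l ≠ 0) :
    RevLexLT ν μ := by
  obtain ⟨l, hls, hνl⟩ := hν
  obtain ⟨j, hj, hlast⟩ := exists_last_ne (a := ν) (b := μ) fun h => hνl (h ▸ hμ l hls)
  refine Or.inr ⟨hdeg, j, ?_, hlast⟩
  by_cases hjs : j ∈ s
  · rw [hμ j hjs] at hj ⊢
    omega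
  · rcases lt_or_ge j l with hjl | hlj
    · exact absurd ((hlast l hjl).trans (hμ l hls)) hνl
    · exact absurd (hs hlj hls) hjs

end RevLexLT

def DegRevLex (n : ℕ) : Type := Fin n →₀ ℕ

namespace DegRevLex

instance : AddCommMonoid (DegRevLex n) := inferInstanceAs (AddCommMonoid (Fin n →₀ ℕ))

instance : LinearOrder (DegRevLex n) :=
  @linearOrderOfSTO (Fin n →₀ ℕ) RevLexLT _ (Classical.decRel _)

instance : IsOrderedAddMonoid (DegRevLex n) where
  add_le_add_left _ _ h c := h.imp (congrArg (· + c)) (RevLexLT.add_right · c)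

instance : WellFoundedLT (DegRevLex n) := ⟨RevLexLT.wellFounded⟩

end DegRevLex

/-- `RevLexLT` as a monomial order; as there, `X 0 > X 1 > ⋯ > X (n - 1)`. -/
def MonomialOrder.degRevLex : MonomialOrder (Fin n) where
  syn := DegRevLex n
  toSyn := AddEquiv.refl _
  toSyn_monotone _ _ h := h.eq_or_lt.imp id RevLexLT.of_lt

attribute [local instance] MvPolynomial.gradedAlgebra

lemma HomogIdeal.isHomogeneous {I : Ideal (MvPolynomial (Fin n) k)} (hI : HomogIdeal I) :
    I.IsHomogeneous (homogeneousSubmodule (Fin n) k) :=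
  fun r f hf => (decomposition.decompose'_apply f r).symm ▸ hI f hf r

namespace MvPolynomial

variable {σ R : Type*} [CommSemiring R]

lemma support_homogeneousComponent_subset (r : ℕ) (f : MvPolynomial σ R) :
    (homogeneousComponent r f).support ⊆ f.support := by
  rw [support_homogeneousComponent]
  exact Finset.filter_subset _ _

lemma IsHomogeneous.degree_eq_of_mem_support {f : MvPolynomial σ R} {r : ℕ}
    (hf : f.IsHomogeneous r) {ν : σ →₀ ℕ} (hν : ν ∈ f.support) : ν.degree = r :=
  by_contra fun h => mem_support_iff.mp hν (hf.coeff_eq_zero h)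

lemma isHomogeneous_of_forall_degree_eq {f : MvPolynomial σ R} {r : ℕ}
    (h : ∀ ν ∈ f.support, ν.degree = r) : f.IsHomogeneous r := fun ν hν => by
  simpa [Finsupp.degree_eq_weight_one, Pi.one_def] using h ν (mem_support_iff.mpr hν)

lemma IsHomogeneous.of_X_mul {i : σ} {f : MvPolynomial σ R} {r : ℕ}
    (h : (X i * f).IsHomogeneous (r + 1)) : f.IsHomogeneous r :=
  isHomogeneous_of_forall_degree_eq fun ν hν => by
    have := h.degree_eq_of_mem_support (ν := Finsupp.single i 1 + ν)
      (by rw [mem_support_iff, coeff_X_mul]; exact mem_support_iff.mp hν)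
    rw [map_add, Finsupp.degree_single] at this
    omega

lemma aeval_monomial_one_of_forall {g : σ → MvPolynomial σ R} {ν : σ →₀ ℕ}
    (h : ∀ j ∈ ν.support, g j = X j) : aeval g (monomial ν (1 : R)) = monomial ν 1 := by
  rw [aeval_monomial, map_one, one_mul, monomial_eq, C_1, one_mul]
  exact Finsupp.prod_congr fun j hj => by rw [h j hj]

lemma aeval_monomial_one_of_exists {g : σ → MvPolynomial σ R} {ν : σ →₀ ℕ} {j : σ}
    (hj : ν j ≠ 0) (h : g j = 0) : aeval g (monomial ν (1 : R)) = 0 := by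
  rw [aeval_monomial, map_one, one_mul]
  exact Finset.prod_eq_zero (Finsupp.mem_support_iff.mpr hj) (by simp [h, zero_pow hj])

lemma mem_supported_iff_forall_support {s : Set σ} {f : MvPolynomial σ R} :
    f ∈ supported R s ↔ ∀ ν ∈ f.support, ∀ j, ν j ≠ 0 → j ∈ s := by
  simp only [mem_supported, Set.subset_def, Finset.mem_coe, mem_vars_iff_mem_support,
    Finsupp.mem_support_iff, mem_support_iff]
  exact ⟨fun h ν hν j hj => h j ⟨ν, hν, hj⟩, fun h j ⟨ν, hν, hj⟩ => h ν hν j hj⟩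

end MvPolynomial

lemma Ideal.map_span_monomial {σ R : Type*} [CommSemiring R]
    {φ : MvPolynomial σ R →ₐ[R] MvPolynomial σ R} {E : Set (σ →₀ ℕ)} {p : (σ →₀ ℕ) → Prop}
    [DecidablePred p] {τ : (σ →₀ ℕ) → σ →₀ ℕ}
    (hφ : ∀ γ, φ (monomial γ 1) = if p γ then monomial (τ γ) 1 else 0) :
    Ideal.map φ (Ideal.span ((fun μ => monomial μ (1 : R)) '' E)) =
      Ideal.span ((fun μ => monomial μ (1 : R)) '' (τ '' {γ ∈ E | p γ})) := by
  rw [Ideal.map_span, Set.image_image]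
  apply le_antisymm <;> rw [Ideal.span_le]
  · rintro _ ⟨γ, hγ, rfl⟩
    simp only [hφ]
    split_ifs with hp
    · exact Ideal.subset_span ⟨τ γ, ⟨γ, ⟨hγ, hp⟩, rfl⟩, rfl⟩
    · exact Ideal.zero_mem _
  · rintro _ ⟨_, ⟨γ, ⟨hγ, hp⟩, rfl⟩, rfl⟩
    exact Ideal.subset_span ⟨γ, hγ, by simp only [hφ, if_pos hp]⟩

namespace MonomialOrder

variable {σ : Type*} {m : MonomialOrder σ}

variable (m) in
/-- The exponents of the monomials of the initial ideal `In(P)`. -/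
def leadingExponents (P : Ideal (MvPolynomial σ k)) : Set (σ →₀ ℕ) :=
  {μ | ∃ f ∈ P, f ≠ 0 ∧ m.degree f = μ}

variable {P : Ideal (MvPolynomial σ k)}

lemma degree_mem_leadingExponents {f : MvPolynomial σ k} (hf : f ∈ P) (hf0 : f ≠ 0) :
    m.degree f ∈ m.leadingExponents P :=
  ⟨f, hf, hf0, rfl⟩

lemma leadingExponents_mono {Q : Ideal (MvPolynomial σ k)} (h : P ≤ Q) :
    m.leadingExponents P ⊆ m.leadingExponents Q :=
  fun _ ⟨f, hf, hf0, hμ⟩ => ⟨f, h hf, hf0, hμ⟩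

lemma isUpperSet_leadingExponents : IsUpperSet (m.leadingExponents P) := by
  classical
  rintro _ ν hle ⟨f, hf, hf0, rfl⟩
  have hmon : monomial (ν - m.degree f) (1 : k) ≠ 0 := by simp
  refine ⟨_, P.mul_mem_left _ hf, mul_ne_zero hmon hf0, ?_⟩
  rw [m.degree_mul hmon hf0, m.degree_monomial, if_neg one_ne_zero, tsub_add_cancel_of_le hle]

lemma degree_eq_of_forall_le {f : MvPolynomial σ k} {μ : σ →₀ ℕ} (hμ : μ ∈ f.support)
    (h : ∀ ν ∈ f.support, ν ≼[m] μ) : m.degree f = μ :=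
  m.toSyn.injective (le_antisymm (m.degree_le_iff.mpr h) (m.le_degree hμ))

lemma exists_isHomogeneous_degree_eq (hP : P.IsHomogeneous (homogeneousSubmodule σ k))
    {μ : σ →₀ ℕ} (hμ : μ ∈ m.leadingExponents P) :
    ∃ g ∈ P, g.IsHomogeneous μ.degree ∧ g ≠ 0 ∧ m.degree g = μ := by
  obtain ⟨f, hf, hf0, rfl⟩ := hμ
  set g := homogeneousComponent (m.degree f).degree f
  have hmem : m.degree f ∈ g.support := by
    rw [mem_support_iff, coeff_homogeneousComponent, if_pos rfl]
    exact m.coeff_degree_ne_zero_iff.mpr hf0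
  exact ⟨g, homogeneousComponent_mem_of_mem hP hf _, homogeneousComponent_isHomogeneous _ _,
    fun h => by simp [h] at hmem, degree_eq_of_forall_le hmem fun ν hν =>
      m.le_degree (support_homogeneousComponent_subset _ f hν)⟩

lemma exists_sub_mem_forall_notMem_leadingExponents
    (hP : P.IsHomogeneous (homogeneousSubmodule σ k)) {f : MvPolynomial σ k} {r : ℕ}
    (hf : f.IsHomogeneous r) :
    ∃ f', f - f' ∈ P ∧ f'.IsHomogeneous r ∧ ∀ ν ∈ f'.support, ν ∉ m.leadingExponents P := by
  let B : Set (MvPolynomial σ k) := {b | b ∈ P ∧ b ≠ 0}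
  obtain ⟨q, rem, hfq, -, hrem⟩ := m.div_set (B := B)
    (fun b hb => (m.leadingCoeff_ne_zero_iff.mpr hb.2).isUnit) f
  have hsub : f - rem ∈ P := by
    refine (Submodule.span_le (s := B)).mpr (fun b hb => hb.1) ?_
    rw [Finsupp.mem_span_iff_linearCombination]
    exact ⟨q, by rw [hfq, add_sub_cancel_right]⟩
  refine ⟨homogeneousComponent r rem, ?_, homogeneousComponent_isHomogeneous r rem, ?_⟩
  · have := homogeneousComponent_mem_of_mem hP hsub r
    rwa [map_sub, homogeneousComponent_of_mem hf, if_pos rfl] at this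
  · rintro ν hν ⟨b, hb, hb0, rfl⟩
    exact hrem _ (support_homogeneousComponent_subset r rem hν) b ⟨hb, hb0⟩ le_rfl

lemma exists_leadingExponents_of_mem_colon (hP : P.IsHomogeneous (homogeneousSubmodule σ k))
    {i : σ} {f : MvPolynomial σ k} {r : ℕ} (hf : f.IsHomogeneous r)
    (hcol : f ∈ P.colon (Ideal.span {(X i : MvPolynomial σ k)})) (hfP : f ∉ P) :
    ∃ μ : σ →₀ ℕ, μ.degree = r ∧ μ ∉ m.leadingExponents P ∧
      μ + Finsupp.single i 1 ∈ m.leadingExponents P := by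
  obtain ⟨f', hff', hf', hfree⟩ := exists_sub_mem_forall_notMem_leadingExponents (m := m) hP hf
  have hf'P : f' ∉ P := fun h => hfP (by simpa using P.add_mem hff' h)
  have hf'0 : f' ≠ 0 := fun h => hf'P (h ▸ P.zero_mem)
  have hXf' : f' * X i ∈ P := by
    refine Ideal.mem_colon_span_singleton.mp ?_
    simpa using Submodule.sub_mem _ hcol (Ideal.le_colon hff')
  have hX0 : (X i : MvPolynomial σ k) ≠ 0 := X_ne_zero i
  refine ⟨m.degree f', hf'.degree_eq_of_mem_support (m.degree_mem_support hf'0),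
    hfree _ (m.degree_mem_support hf'0), ?_⟩
  rw [← m.degree_X (R := k), ← m.degree_mul hf'0 hX0]
  exact degree_mem_leadingExponents hXf' (mul_ne_zero hf'0 hX0)

end MonomialOrder

open MonomialOrder

/-- Revlex makes `X i` the last variable among `X 0, …, X i`. -/
lemma X_dvd_of_degRevLex_degree_apply_ne_zero {i : Fin n} {g : MvPolynomial (Fin n) k} {r : ℕ}
    (hg : g.IsHomogeneous r) (htail : ∀ ν ∈ g.support, ∀ l, i < l → ν l = 0)
    (hi : degRevLex.degree g i ≠ 0) : X i ∣ g := by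
  rcases eq_or_ne g 0 with rfl | hg0
  · exact dvd_zero _
  have hmem := degRevLex.degree_mem_support hg0
  have hdvd : ∀ ν ∈ g.support, ν i ≠ 0 := by
    intro ν hν hνi
    have hlt : RevLexLT (degRevLex.degree g) ν := by
      refine RevLexLT.of_isUpperSet (isUpperSet_Ici i) ?_ (fun l hl => ?_) ⟨i, le_refl i, hi⟩
      · rw [hg.degree_eq_of_mem_support hmem, hg.degree_eq_of_mem_support hν]
      · rcases (Set.mem_Ici.mp hl).lt_or_eq with hl | rfl
        · exact htail ν hν l hl
        · exact hνi
    exact not_lt_of_ge (degRevLex.le_degree hν) hlt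
  have : g ∈ Ideal.span ((fun μ => monomial μ (1 : k)) '' {Finsupp.single i 1}) :=
    mem_ideal_span_monomial_image.mpr fun ν hν =>
      ⟨_, rfl, Finsupp.single_le_iff.mpr (Nat.one_le_iff_ne_zero.mpr (hdvd ν hν))⟩
  exact Ideal.mem_span_singleton.mp (by rwa [Set.image_singleton] at this)

variable (k) in
/-- The paper's `(x_n, …, x_{n-i'+1})` is `tailIdeal k (n - 1 - i')`, the variables being
`X 0, …, X (n - 1)`. -/
def tailIdeal (i : Fin n) : Ideal (MvPolynomial (Fin n) k) :=
  Ideal.span (X '' Set.Ioi i)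

section TailIdeal

variable {i : Fin n}

lemma mem_tailIdeal_iff {f : MvPolynomial (Fin n) k} :
    f ∈ tailIdeal k i ↔ ∀ ν ∈ f.support, ∃ l, i < l ∧ ν l ≠ 0 := by
  have : X '' Set.Ioi i =
      (fun μ => monomial μ (1 : k)) '' ((Finsupp.single · 1) '' Set.Ioi i) := by
    rw [Set.image_image]
    rfl
  rw [tailIdeal, this, mem_ideal_span_monomial_image]
  simp [Finsupp.single_le_iff, Nat.one_le_iff_ne_zero]

lemma coeff_eq_of_sub_mem_tailIdeal {f g : MvPolynomial (Fin n) k} (h : f - g ∈ tailIdeal k i)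
    {ν : Fin n →₀ ℕ} (hν : ∀ l, i < l → ν l = 0) : coeff ν f = coeff ν g := by
  have : coeff ν (f - g) = 0 := notMem_support_iff.mp fun hmem =>
    let ⟨l, hl, hνl⟩ := mem_tailIdeal_iff.mp h ν hmem; hνl (hν l hl)
  rwa [coeff_sub, sub_eq_zero] at this

lemma isHomogeneous_tailIdeal (i : Fin n) :
    (tailIdeal k i).IsHomogeneous (homogeneousSubmodule (Fin n) k) :=
  Ideal.homogeneous_span _ _ fun _ ⟨l, _, hl⟩ => ⟨1, hl ▸ isHomogeneous_X k l⟩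

lemma apply_eq_zero_of_notMem_leadingExponents {m : MonomialOrder (Fin n)}
    {P : Ideal (MvPolynomial (Fin n) k)} (htail : tailIdeal k i ≤ P)
    {ν : Fin n →₀ ℕ} (hν : ν ∉ m.leadingExponents P) {l : Fin n} (hl : i < l) : ν l = 0 := by
  by_contra h
  refine hν (isUpperSet_leadingExponents
    (Finsupp.single_le_iff.mpr (Nat.one_le_iff_ne_zero.mpr h)) ?_)
  rw [← m.degree_X (R := k)]
  exact degree_mem_leadingExponents (htail (Ideal.subset_span ⟨l, hl, rfl⟩)) (X_ne_zero l)

lemma exists_sub_mem_tailIdeal {f : MvPolynomial (Fin n) k} {r : ℕ} (hf : f.IsHomogeneous r) :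
    ∃ f', f - f' ∈ tailIdeal k i ∧ f'.IsHomogeneous r ∧
      ∀ ν ∈ f'.support, ∀ l, i < l → ν l = 0 := by
  obtain ⟨f', hff', hf', hfree⟩ := exists_sub_mem_forall_notMem_leadingExponents
    (m := degRevLex) (isHomogeneous_tailIdeal i) hf
  exact ⟨f', hff', hf', fun ν hν _ hl =>
    apply_eq_zero_of_notMem_leadingExponents le_rfl (hfree ν hν) hl⟩

/-- Bayer–Stillman: `In(I + (X l : l > i)) = In(I) + (X l : l > i)`. -/
lemma mem_leadingExponents_of_mem_sup_tailIdeal {I : Ideal (MvPolynomial (Fin n) k)}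
    (hI : I.IsHomogeneous (homogeneousSubmodule (Fin n) k)) {ν : Fin n →₀ ℕ}
    (hν : ∀ l, i < l → ν l = 0) (h : ν ∈ degRevLex.leadingExponents (I ⊔ tailIdeal k i)) :
    ν ∈ degRevLex.leadingExponents I := by
  obtain ⟨g, hg, hghom, hg0, rfl⟩ :=
    exists_isHomogeneous_degree_eq (hI.sup (isHomogeneous_tailIdeal i)) h
  obtain ⟨a, ha, b, hb, rfl⟩ := Submodule.mem_sup.mp hg
  set r := (degRevLex.degree (a + b)).degree
  set a' := homogeneousComponent r a
  have hsub : a + b - a' ∈ tailIdeal k i := by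
    have hab : homogeneousComponent r (a + b) = a + b := by
      rw [homogeneousComponent_of_mem hghom, if_pos rfl]
    rw [← hab, map_add, add_sub_cancel_left]
    exact homogeneousComponent_mem_of_mem (isHomogeneous_tailIdeal i) hb r
  have hmem : degRevLex.degree (a + b) ∈ a'.support := by
    rw [mem_support_iff, ← coeff_eq_of_sub_mem_tailIdeal hsub hν]
    exact degRevLex.coeff_degree_ne_zero_iff.mpr hg0
  refine ⟨a', homogeneousComponent_mem_of_mem hI ha r, fun h => by simp [h] at hmem,
    degree_eq_of_forall_le hmem fun ρ hρ => ?_⟩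
  by_cases htail : ∃ l, i < l ∧ ρ l ≠ 0
  · refine Or.inr (RevLexLT.of_isUpperSet (isUpperSet_Ioi i) ?_ hν htail)
    exact (homogeneousComponent_isHomogeneous r a).degree_eq_of_mem_support hρ
  · push Not at htail
    refine degRevLex.le_degree ?_
    rw [mem_support_iff, coeff_eq_of_sub_mem_tailIdeal hsub htail]
    exact mem_support_iff.mp hρ

lemma exists_mem_colon_of_leadingExponents {P : Ideal (MvPolynomial (Fin n) k)}
    (hP : P.IsHomogeneous (homogeneousSubmodule (Fin n) k)) (htail : tailIdeal k i ≤ P)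
    {μ : Fin n →₀ ℕ} (hμ : μ ∉ degRevLex.leadingExponents P)
    (hμi : μ + Finsupp.single i 1 ∈ degRevLex.leadingExponents P) :
    ∃ f : MvPolynomial (Fin n) k, f.IsHomogeneous μ.degree ∧
      f ∈ P.colon (Ideal.span {(X i : MvPolynomial (Fin n) k)}) ∧ f ∉ P := by
  set ρ := μ + Finsupp.single i 1
  have hρtail : ∀ l, i < l → ρ l = 0 := fun l hl => by
    simp [ρ, hl.ne, apply_eq_zero_of_notMem_leadingExponents htail hμ hl]
  obtain ⟨g, hg, hghom, hg0, hgdeg⟩ := exists_isHomogeneous_degree_eq hP hμi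
  obtain ⟨g', hgg', hg'hom, hg'tail⟩ := exists_sub_mem_tailIdeal (i := i) hghom
  have hg'P : g' ∈ P := by simpa using P.sub_mem hg (htail hgg')
  have hg'deg : degRevLex.degree g' = ρ := by
    refine degree_eq_of_forall_le ?_ fun ν hν => ?_
    · rw [mem_support_iff, ← coeff_eq_of_sub_mem_tailIdeal hgg' hρtail, ← hgdeg]
      exact degRevLex.coeff_degree_ne_zero_iff.mpr hg0
    · rw [← hgdeg]
      refine degRevLex.le_degree ?_
      rw [mem_support_iff, coeff_eq_of_sub_mem_tailIdeal hgg' (hg'tail ν hν)]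
      exact mem_support_iff.mp hν
  obtain ⟨h, rfl⟩ := X_dvd_of_degRevLex_degree_apply_ne_zero hg'hom hg'tail (by simp [hg'deg, ρ])
  have hX0 : (X i : MvPolynomial (Fin n) k) ≠ 0 := X_ne_zero i
  have hh0 : h ≠ 0 := by
    rintro rfl
    simpa [ρ] using congrArg (· i) hg'deg
  have hhdeg : degRevLex.degree h = μ := by
    rw [degRevLex.degree_mul hX0 hh0, degree_X, add_comm] at hg'deg
    exact add_right_cancel hg'deg
  refine ⟨h, IsHomogeneous.of_X_mul (by simpa [ρ] using hg'hom),
    Ideal.mem_colon_span_singleton.mpr (by rwa [mul_comm]),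
    fun hhP => hμ (hhdeg ▸ degree_mem_leadingExponents hhP hh0)⟩

lemma exists_mem_colon_sup_tailIdeal_iff {I : Ideal (MvPolynomial (Fin n) k)}
    (hI : I.IsHomogeneous (homogeneousSubmodule (Fin n) k)) (r : ℕ) :
    (∃ f : MvPolynomial (Fin n) k, f.IsHomogeneous r ∧
        f ∈ (I ⊔ tailIdeal k i).colon (Ideal.span {(X i : MvPolynomial (Fin n) k)}) ∧
        f ∉ I ⊔ tailIdeal k i) ↔
      ∃ μ : Fin n →₀ ℕ, (∀ l, i < l → μ l = 0) ∧ μ.degree = r ∧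
        μ ∉ degRevLex.leadingExponents I ∧
        μ + Finsupp.single i 1 ∈ degRevLex.leadingExponents I := by
  have hP := hI.sup (isHomogeneous_tailIdeal (k := k) i)
  have hle := leadingExponents_mono (m := degRevLex) (le_sup_left : I ≤ I ⊔ tailIdeal k i)
  constructor
  · rintro ⟨f, hf, hcol, hfP⟩
    obtain ⟨μ, rfl, hμ, hμi⟩ := exists_leadingExponents_of_mem_colon hP hf hcol hfP
    have hμtail : ∀ l, i < l → μ l = 0 := fun l hl =>
      apply_eq_zero_of_notMem_leadingExponents le_sup_right hμ hl
    refine ⟨μ, hμtail, rfl, fun h => hμ (hle h),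
      mem_leadingExponents_of_mem_sup_tailIdeal hI (fun l hl => ?_) hμi⟩
    simp [hl.ne, hμtail l hl]
  · rintro ⟨μ, hμtail, rfl, hμ, hμi⟩
    exact exists_mem_colon_of_leadingExponents hP le_sup_right
      (fun h => hμ (mem_leadingExponents_of_mem_sup_tailIdeal hI hμtail h)) (hle hμi)

lemma topDiff_colon_sup_tailIdeal {I : Ideal (MvPolynomial (Fin n) k)}
    (hI : I.IsHomogeneous (homogeneousSubmodule (Fin n) k)) :
    topDiff ((I ⊔ tailIdeal k i).colon (Ideal.span {(X i : MvPolynomial (Fin n) k)}))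
        (I ⊔ tailIdeal k i) =
      sSup {x | ∃ r : ℕ, x = natW r ∧ ∃ μ : Fin n →₀ ℕ, (∀ l, i < l → μ l = 0) ∧
        μ.degree = r ∧ μ ∉ degRevLex.leadingExponents I ∧
        μ + Finsupp.single i 1 ∈ degRevLex.leadingExponents I} := by
  simp only [topDiff, ← exists_mem_colon_sup_tailIdeal_iff hI]
  congr! 6 with _ r
  push Not
  refine exists_congr fun f => and_congr_right fun _ => ⟨?_, Or.inl⟩
  rintro (h | ⟨hC, hP⟩)
  · exact h
  · exact absurd (Ideal.le_colon hP) hC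

end TailIdeal

lemma initialIdeal_eq_span (I : Ideal (MvPolynomial (Fin n) k)) :
    initialIdeal I =
      Ideal.span ((fun μ => monomial μ (1 : k)) '' degRevLex.leadingExponents I) := by
  refine congrArg Ideal.span (Set.ext fun g => ⟨?_, ?_⟩)
  · rintro ⟨f, hf, hf0, μ, hμ, hmax, rfl⟩
    exact ⟨μ, ⟨f, hf, hf0, degree_eq_of_forall_le hμ hmax⟩, rfl⟩
  · rintro ⟨_, ⟨f, hf, hf0, rfl⟩, rfl⟩
    exact ⟨f, hf, hf0, _, degRevLex.degree_mem_support hf0, fun ν hν => degRevLex.le_degree hν,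
      rfl⟩

section Evaluations

variable {i : ℕ} {idx : Fin n}

open Classical in
lemma evalZero_monomial (hidx : (idx : ℕ) + 1 = n - i) (γ : Fin n →₀ ℕ) :
    evalZero k n i (monomial γ 1) = if ∀ l, idx < l → γ l = 0 then monomial γ 1 else 0 := by
  split_ifs with h
  · refine aeval_monomial_one_of_forall fun j hj => if_pos ?_
    have := mt (h j) (Finsupp.mem_support_iff.mp hj)
    rw [not_lt, Fin.le_def] at this
    omega
  · push Not at h
    obtain ⟨l, hl, hγl⟩ := h
    refine aeval_monomial_one_of_exists hγl (if_neg ?_)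
    rw [Fin.lt_def] at hl
    omega

open Classical in
lemma evalOne_monomial (hidx : (idx : ℕ) + 1 = n - i) (γ : Fin n →₀ ℕ) :
    evalOne k n i (monomial γ 1) =
      if ∀ l, idx < l → γ l = 0 then monomial (γ.erase idx) 1 else 0 := by
  split_ifs with h
  · have hX : evalOne k n i (X idx) = 1 := by
      rw [evalOne, aeval_X, if_neg (by omega), if_pos (by omega)]
    conv_lhs => rw [← Finsupp.single_add_erase idx γ, ← mul_one (1 : k), ← monomial_mul,
      ← X_pow_eq_monomial, map_mul, map_pow, hX, one_pow, one_mul]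
    refine aeval_monomial_one_of_forall fun j hj => if_pos ?_
    rw [Finsupp.mem_support_iff] at hj
    have hne : j ≠ idx := fun h => hj (h ▸ Finsupp.erase_same)
    have := mt (h j) (by rwa [Finsupp.erase_ne hne] at hj)
    rw [not_lt, Fin.le_def] at this
    have := Fin.val_ne_of_ne hne
    omega
  · push Not at h
    obtain ⟨l, hl, hγl⟩ := h
    refine aeval_monomial_one_of_exists hγl ?_
    rw [Fin.lt_def] at hl
    rw [if_neg (by omega), if_neg (by omega)]

lemma Jlow_eq (hidx : (idx : ℕ) + 1 = n - i) (I : Ideal (MvPolynomial (Fin n) k)) :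
    Jlow i I = Ideal.span ((fun μ => monomial μ (1 : k)) ''
      {γ ∈ degRevLex.leadingExponents I | ∀ l, idx < l → γ l = 0}) := by
  classical
  rw [Jlow, initialIdeal_eq_span, Ideal.map_span_monomial (τ := id)
    (fun γ => evalZero_monomial hidx γ), Set.image_id]

lemma Jtil_eq (hidx : (idx : ℕ) + 1 = n - i) (I : Ideal (MvPolynomial (Fin n) k)) :
    Jtil i I = Ideal.span ((fun μ => monomial μ (1 : k)) '' (Finsupp.erase idx ''
      {γ ∈ degRevLex.leadingExponents I | ∀ l, idx < l → γ l = 0})) := by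
  classical
  rw [Jtil, initialIdeal_eq_span, Ideal.map_span_monomial (fun γ => evalOne_monomial hidx γ)]

lemma exists_mem_Jtil_notMem_Jlow_iff (hidx : (idx : ℕ) + 1 = n - i)
    (I : Ideal (MvPolynomial (Fin n) k)) (r : ℕ) :
    (∃ f : MvPolynomial (Fin n) k, f ∈ Jtil i I ∧ f ∈ supported k {j : Fin n | (j : ℕ) < n - i} ∧
        f.IsHomogeneous r ∧ f ∉ Jlow i I) ↔
      ∃ μ : Fin n →₀ ℕ, (∀ l, idx < l → μ l = 0) ∧ μ.degree = r ∧
        μ ∉ degRevLex.leadingExponents I ∧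
        ∃ m, μ + Finsupp.single idx m ∈ degRevLex.leadingExponents I := by
  have hE := isUpperSet_leadingExponents (m := degRevLex) (P := I)
  have hsmall : ∀ l : Fin n, (l : ℕ) < n - i ↔ ¬ idx < l := fun l => by
    rw [Fin.lt_def]
    omega
  rw [Jtil_eq hidx, Jlow_eq hidx]
  simp only [mem_ideal_span_monomial_image, mem_supported_iff_forall_support, Set.mem_ofPred_eq,
    hsmall]
  constructor
  · rintro ⟨f, hJt, hsupp, hf, hJl⟩
    push Not at hJl
    obtain ⟨μ, hμ, hμfree⟩ := hJl
    have hμtail : ∀ l, idx < l → μ l = 0 := fun l hl => by_contra fun h => hsupp μ hμ l h hl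
    obtain ⟨_, ⟨γ, ⟨hγE, -⟩, rfl⟩, hle⟩ := hJt μ hμ
    refine ⟨μ, hμtail, hf.degree_eq_of_mem_support hμ, fun h => hμfree μ ⟨h, hμtail⟩ le_rfl,
      γ idx, hE (fun l => ?_) hγE⟩
    by_cases hl : l = idx
    · simp [hl]
    · simpa [hl, Finsupp.erase_ne hl, Finsupp.single_apply, Ne.symm hl] using hle l
  · rintro ⟨μ, hμtail, rfl, hμE, m, hm⟩
    have hsupp : (monomial μ (1 : k)).support = {μ} := by
      classical exact support_monomial.trans (if_neg one_ne_zero)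
    refine ⟨monomial μ 1, ?_, ?_, isHomogeneous_monomial _ rfl, ?_⟩ <;>
      simp only [hsupp, Finset.mem_singleton, forall_eq]
    · refine ⟨_, ⟨μ + Finsupp.single idx m, ⟨hm, fun l hl => ?_⟩, rfl⟩, fun l => ?_⟩
      · simp [hμtail l hl, hl.ne]
      · by_cases hl : l = idx
        · simp [hl]
        · simp [Finsupp.erase_ne hl]
    · exact fun l hl hlt => hl (hμtail l hlt)
    · rintro ⟨γ, ⟨hγE, -⟩, hle⟩
      exact hμE (hE hle hγE)

lemma cInv_eq (hidx : (idx : ℕ) + 1 = n - i) (I : Ideal (MvPolynomial (Fin n) k)) :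
    cInv i I = sSup {x | ∃ r : ℕ, x = natW r ∧ ∃ μ : Fin n →₀ ℕ, (∀ l, idx < l → μ l = 0) ∧
      μ.degree = r ∧ μ ∉ degRevLex.leadingExponents I ∧
      ∃ m, μ + Finsupp.single idx m ∈ degRevLex.leadingExponents I} := by
  simp only [cInv, exists_mem_Jtil_notMem_Jlow_iff hidx]

end Evaluations

/-- Taking the least `m` with `x_i^m x^μ ∈ E` trades the second condition for the first, at a
degree no smaller. -/
lemma sSup_natW_degree_add_single_eq {E : Set (Fin n →₀ ℕ)} {i : Fin n} :
    sSup {x | ∃ r : ℕ, x = natW r ∧ ∃ μ : Fin n →₀ ℕ, (∀ l, i < l → μ l = 0) ∧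
        μ.degree = r ∧ μ ∉ E ∧ μ + Finsupp.single i 1 ∈ E} =
      sSup {x | ∃ r : ℕ, x = natW r ∧ ∃ μ : Fin n →₀ ℕ, (∀ l, i < l → μ l = 0) ∧
        μ.degree = r ∧ μ ∉ E ∧ ∃ m, μ + Finsupp.single i m ∈ E} := by
  refine le_antisymm (sSup_le_sSup_of_isCofinalFor ?_) (sSup_le_sSup_of_isCofinalFor ?_)
  · rintro _ ⟨r, rfl, μ, hμtail, hdeg, hμ, hμi⟩
    exact ⟨_, ⟨r, rfl, μ, hμtail, hdeg, hμ, 1, hμi⟩, le_rfl⟩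
  · rintro _ ⟨_, rfl, μ, hμtail, rfl, hμ, hm⟩
    obtain ⟨m, hm, hm1⟩ := Nat.exists_not_and_succ_of_not_zero_of_exists
      (p := fun m => μ + Finsupp.single i m ∈ E) (by simpa) hm
    refine ⟨_, ⟨_, rfl, μ + Finsupp.single i m, fun l hl => ?_, rfl, hm, ?_⟩, ?_⟩
    · simp [hμtail l hl, hl.ne]
    · rwa [add_assoc, ← Finsupp.single_add]
    · simp only [natW, map_add, Finsupp.degree_single]
      exact_mod_cast Nat.le_add_right _ _

/-- Lemma 3.1: for `z = xₙ, …, x_{n-t}` and `i ≤ t`,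
`a_z^i(S/I) = c_i(I)`. -/
theorem stmt_3 {k : Type*} [Field k] {n : ℕ} (I : Ideal (MvPolynomial (Fin n) k))
    (hI : HomogIdeal I) (t : ℕ) (ht : t < n) (i : Fin (t + 1)) :
    aInv I (fun j : Fin (t + 1) =>
        (X ⟨n - 1 - (j : ℕ), by omega⟩ : MvPolynomial (Fin n) k)) i
      = cInv (i : ℕ) I := by
  set idx : Fin n := ⟨n - 1 - i, by omega⟩
  have hidx : (idx : ℕ) + 1 = n - i := by
    simp only [idx]
    omega
  have hpart : partIdeal I (fun j : Fin (t + 1) =>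
      (X ⟨n - 1 - (j : ℕ), by omega⟩ : MvPolynomial (Fin n) k)) i = I ⊔ tailIdeal k idx := by
    rw [partIdeal, tailIdeal]
    congr 2
    ext p
    simp only [Set.mem_image, Set.mem_ofPred_eq, Set.mem_Ioi, Fin.lt_def, idx]
    constructor
    · rintro ⟨j, hj, rfl⟩
      exact ⟨⟨n - 1 - j, by omega⟩, by simp only; omega, rfl⟩
    · rintro ⟨l, hl, rfl⟩
      exact ⟨⟨n - 1 - l, by omega⟩, by simp only; omega, congrArg X (Fin.ext (by simp only; omega))⟩
  rw [aInv, hpart, cInv_eq hidx, ← sSup_natW_degree_add_single_eq]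
  exact topDiff_colon_sup_tailIdeal hI.isHomogeneous
end
end

section
/- Assume c_i(I) < ∞ for i = 0,...,d-1, where d = dim S/I. Then the reduction number of S/I with respect to z = x_n,...,x_{n-d+1} equals r(I); that is, max{ r : (S/(I,x_n,...,x_{n-d+1}))_r ≠ 0 } = max{ r : (S_d/J_d)_r ≠ 0 }. -/
open MvPolynomial

noncomputable section

variable {k : Type*} [Field k] {n : ℕ}

/-!
Let `Z = (x_{n-d+1}, …, x_n)`. In every degree the monomials in `I + Z` are exactly those in
`In(I) + Z`. If `x^μ` avoids the last variables and `x^μ ≡ g mod Z` with `g ∈ I`, every other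
monomial of degree `|μ|` in `g` involves a last variable and is therefore revlex-smaller than `μ`,
so `x^μ ∈ In(I)`. Conversely, if a leading monomial `x^ρ` of `f ∈ I` divides `x^μ`, then
`x^(μ-ρ) f_{|ρ|} ∈ I` has leading monomial `x^μ`, and its other monomials are smaller, hence in
`I + Z` by well-founded induction on revlex. So `S/(I,z)` and `S/(In(I),z)` vanish in the same
degrees, and for polynomials in `x₁, …, x_{n-d}` membership in `In(I) + Z` is membership in `J_d`.
-/

lemma degOf_add (a b : Fin n →₀ ℕ) : degOf (a + b) = degOf a + degOf b :=
  map_add (Finsupp.degree (σ := Fin n)) a b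

lemma degOf_eq_weight (a : Fin n →₀ ℕ) : degOf a = Finsupp.weight 1 a := by
  show Finsupp.degree a = _
  rw [Finsupp.degree_eq_weight_one]; rfl

lemma isHomogeneous_iff_degOf {f : MvPolynomial (Fin n) k} {r : ℕ} :
    f.IsHomogeneous r ↔ ∀ ν ∈ f.support, degOf ν = r := by
  simp only [mem_support_iff, degOf_eq_weight]
  rfl

namespace RevLexLT

lemma add_left {a b : Fin n →₀ ℕ} (h : RevLexLT a b) (c : Fin n →₀ ℕ) :
    RevLexLT (c + a) (c + b) := by
  simp only [RevLexLT, degOf_add, Finsupp.add_apply] at h ⊢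
  rcases h with h | ⟨e, j, hj, hl⟩
  · exact Or.inl (by omega)
  · exact Or.inr ⟨by omega, j, by omega, fun l hlt => by rw [hl l hlt]⟩

lemma finite_setOf_lt (b : Fin n →₀ ℕ) : {a | RevLexLT a b}.Finite := by
  refine (Finsupp.finite_of_degree_le (degOf b)).subset fun a h => ?_
  rcases h with h | ⟨h, -⟩
  exacts [h.le, h.le]

end RevLexLT

def AvoidsLast (d : ℕ) (μ : Fin n →₀ ℕ) : Prop :=
  ∀ j : Fin n, n - d ≤ (j : ℕ) → μ j = 0

lemma RevLexLT.of_avoidsLast {d : ℕ} {a b : Fin n →₀ ℕ} (hdeg : degOf a = degOf b)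
    (ha : AvoidsLast d a) (hb : ¬ AvoidsLast d b) : RevLexLT b a := by
  classical
  simp only [AvoidsLast, not_forall] at hb
  obtain ⟨j₀, hj₀, hbj₀⟩ := hb
  obtain ⟨j, hj, hmax⟩ := (Finset.univ.filter fun j : Fin n => n - d ≤ (j : ℕ) ∧ b j ≠ 0)
    |>.exists_max_image id ⟨j₀, by
    simp only [Finset.mem_filter, Finset.mem_univ, true_and]; exact ⟨hj₀, hbj₀⟩⟩
  simp only [Finset.mem_filter, Finset.mem_univ, true_and] at hj hmax
  refine Or.inr ⟨hdeg.symm, j, by rw [ha j hj.1]; exact Nat.pos_of_ne_zero hj.2, fun l hl => ?_⟩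
  have hld : n - d ≤ (l : ℕ) := hj.1.trans (Fin.le_def.mp hl.le)
  rw [ha l hld]
  by_contra hbl
  exact absurd (hmax l ⟨hld, hbl⟩) (not_le.mpr hl)

def IsRevLexLeading (f : MvPolynomial (Fin n) k) (μ : Fin n →₀ ℕ) : Prop :=
  μ ∈ f.support ∧ ∀ ν ∈ f.support, ν = μ ∨ RevLexLT ν μ

namespace IsRevLexLeading

variable {f : MvPolynomial (Fin n) k} {μ : Fin n →₀ ℕ}

lemma monomial_mem_initialIdeal {I : Ideal (MvPolynomial (Fin n) k)} (hf : f ∈ I)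
    (h : IsRevLexLeading f μ) : monomial μ (1 : k) ∈ initialIdeal I :=
  Ideal.subset_span ⟨f, hf, ne_zero_iff.mpr ⟨μ, mem_support_iff.mp h.1⟩, μ, h.1, h.2, rfl⟩

lemma homogeneousComponent (h : IsRevLexLeading f μ) :
    IsRevLexLeading (MvPolynomial.homogeneousComponent (degOf μ) f) μ := by
  simp only [IsRevLexLeading, support_homogeneousComponent, Finset.mem_filter]
  exact ⟨⟨h.1, rfl⟩, fun ν hν => h.2 ν hν.1⟩

lemma monomial_mul (h : IsRevLexLeading f μ) (σ : Fin n →₀ ℕ) :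
    IsRevLexLeading (monomial σ (1 : k) * f) (σ + μ) := by
  have hsupp : ∀ ν, ν ∈ (monomial σ (1 : k) * f).support ↔ σ ≤ ν ∧ ν - σ ∈ f.support := by
    intro ν
    rw [mem_support_iff, mem_support_iff, coeff_monomial_mul']
    split_ifs with hσν <;> simp [hσν]
  refine ⟨(hsupp _).mpr ⟨le_self_add, by rw [add_tsub_cancel_left]; exact h.1⟩, fun ν hν => ?_⟩
  obtain ⟨hσν, hν⟩ := (hsupp ν).mp hν
  rw [← add_tsub_cancel_of_le hσν]
  rcases h.2 _ hν with heq | hlt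
  · exact Or.inl (by rw [heq])
  · exact Or.inr (hlt.add_left σ)

end IsRevLexLeading

lemma exists_isRevLexLeading_le_of_mem_initialIdeal {I : Ideal (MvPolynomial (Fin n) k)}
    {g : MvPolynomial (Fin n) k} (hg : g ∈ initialIdeal I) {ν : Fin n →₀ ℕ}
    (hν : ν ∈ g.support) : ∃ f ∈ I, ∃ ρ, IsRevLexLeading f ρ ∧ ρ ≤ ν := by
  have hgens : initialIdeal I = Ideal.span ((fun s => monomial s (1 : k)) ''
      {ρ | ∃ f ∈ I, IsRevLexLeading f ρ}) := by
    rw [initialIdeal]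
    congr 1
    ext g
    constructor
    · rintro ⟨f, hf, -, ρ, hρ, hmax, rfl⟩
      exact ⟨ρ, ⟨f, hf, hρ, hmax⟩, rfl⟩
    · rintro ⟨ρ, ⟨f, hf, hρ, hmax⟩, rfl⟩
      exact ⟨f, hf, ne_zero_iff.mpr ⟨ρ, mem_support_iff.mp hρ⟩, ρ, hρ, hmax, rfl⟩
  rw [hgens, mem_ideal_span_monomial_image] at hg
  obtain ⟨ρ, ⟨f, hf, hρ⟩, hle⟩ := hg ν hν
  exact ⟨f, hf, ρ, hρ, hle⟩

/-- `Z = (x_{n-d+1}, …, x_n)` in the paper's 1-based indexing. -/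
def lastVars (k : Type*) [Field k] (n d : ℕ) : Ideal (MvPolynomial (Fin n) k) :=
  Ideal.span (X '' {j : Fin n | n - d ≤ (j : ℕ)})

lemma mem_lastVars_iff {d : ℕ} {f : MvPolynomial (Fin n) k} :
    f ∈ lastVars k n d ↔ ∀ ν ∈ f.support, ¬ AvoidsLast d ν := by
  simp only [lastVars, mem_ideal_span_X_image, AvoidsLast, not_forall, Set.mem_ofPred_eq,
    exists_prop]

lemma monomial_mem_lastVars {d : ℕ} {μ : Fin n →₀ ℕ} (hμ : ¬ AvoidsLast d μ) (c : k) :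
    monomial μ c ∈ lastVars k n d :=
  mem_lastVars_iff.mpr fun ν hν => by
    rwa [Finset.mem_singleton.mp (support_monomial_subset hν)]

lemma coeff_eq_zero_of_mem_lastVars {d : ℕ} {f : MvPolynomial (Fin n) k}
    (hf : f ∈ lastVars k n d) {μ : Fin n →₀ ℕ} (hμ : AvoidsLast d μ) : coeff μ f = 0 :=
  notMem_support_iff.mp fun h => mem_lastVars_iff.mp hf μ h hμ

lemma mem_supported_iff_avoidsLast {d : ℕ} {f : MvPolynomial (Fin n) k} :
    f ∈ supported k {j : Fin n | (j : ℕ) < n - d} ↔ ∀ ν ∈ f.support, AvoidsLast d ν := by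
  simp only [mem_supported, Set.subset_def, Finset.mem_coe, mem_vars_iff_mem_support,
    Set.mem_ofPred_eq, AvoidsLast, Finsupp.mem_support_iff]
  constructor
  · intro h ν hν j hj
    by_contra hνj
    exact absurd (h j ⟨ν, hν, hνj⟩) (not_lt.mpr hj)
  · rintro h j ⟨ν, hν, hνj⟩
    by_contra hj
    exact hνj (h ν hν j (not_lt.mp hj))

lemma monomial_mem_supported {d : ℕ} {μ : Fin n →₀ ℕ} (hμ : AvoidsLast d μ) (c : k) :
    monomial μ c ∈ supported k {j : Fin n | (j : ℕ) < n - d} :=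
  mem_supported_iff_avoidsLast.mpr fun ν hν => by
    rwa [Finset.mem_singleton.mp (support_monomial_subset hν)]

lemma evalZero_eq_self_of_mem_supported {d : ℕ} {f : MvPolynomial (Fin n) k}
    (hf : f ∈ supported k {j : Fin n | (j : ℕ) < n - d}) : evalZero k n d f = f := by
  refine hom_congr_vars (f₂ := RingHom.id _) (by ext; simp [evalZero])
    (fun j hj _ => ?_) rfl
  have hj' : (j : ℕ) < n - d := mem_supported.mp hf hj
  simp [evalZero, hj']

lemma lastVars_le_ker_evalZero (d : ℕ) : lastVars k n d ≤ RingHom.ker (evalZero k n d) := by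
  refine Ideal.span_le.mpr ?_
  rintro _ ⟨j, hj, rfl⟩
  simp only [Set.mem_ofPred_eq] at hj
  simp [evalZero, not_lt.mpr hj]

lemma sub_evalZero_mem_lastVars (d : ℕ) (f : MvPolynomial (Fin n) k) :
    f - evalZero k n d f ∈ lastVars k n d := by
  suffices h : (Ideal.Quotient.mkₐ k (lastVars k n d)).comp (evalZero k n d) =
      Ideal.Quotient.mkₐ k (lastVars k n d) by
    rw [← Ideal.Quotient.eq, ← Ideal.Quotient.mkₐ_eq_mk k, ← AlgHom.comp_apply, h]
  refine algHom_ext fun j => ?_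
  simp only [AlgHom.comp_apply, evalZero, aeval_X]
  split_ifs with hj
  · rfl
  · rw [map_zero, eq_comm, Ideal.Quotient.mkₐ_eq_mk, Ideal.Quotient.eq_zero_iff_mem]
    exact Ideal.subset_span ⟨j, not_lt.mp hj, rfl⟩

lemma mem_map_evalZero_iff (P : Ideal (MvPolynomial (Fin n) k)) {d : ℕ}
    {f : MvPolynomial (Fin n) k} (hf : f ∈ supported k {j : Fin n | (j : ℕ) < n - d}) :
    f ∈ P.map (evalZero k n d) ↔ f ∈ P ⊔ lastVars k n d := by
  constructor
  · refine fun h => Ideal.map_le_iff_le_comap.mpr (fun g hg => ?_) h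
    rw [Ideal.mem_comap, ← sub_sub_cancel g (evalZero k n d g)]
    exact sub_mem (Submodule.mem_sup_left hg)
      (Submodule.mem_sup_right (sub_evalZero_mem_lastVars d g))
  · intro h
    obtain ⟨a, ha, b, hb, rfl⟩ := Submodule.mem_sup.mp h
    rw [← evalZero_eq_self_of_mem_supported hf, map_add,
      RingHom.mem_ker.mp (lastVars_le_ker_evalZero d hb), add_zero]
    exact Ideal.mem_map_of_mem _ ha

lemma forall_isHomogeneous_mem_iff (P : Ideal (MvPolynomial (Fin n) k)) (r : ℕ) :
    (∀ f : MvPolynomial (Fin n) k, f.IsHomogeneous r → f ∈ P) ↔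
      ∀ μ : Fin n →₀ ℕ, degOf μ = r → monomial μ (1 : k) ∈ P := by
  refine ⟨fun h μ hμ => h _ (isHomogeneous_monomial _ hμ), fun h f hf => ?_⟩
  rw [f.as_sum]
  refine Ideal.sum_mem _ fun ν hν => ?_
  rw [← mul_one (coeff ν f), ← C_mul_monomial]
  exact Ideal.mul_mem_left _ _ (h ν (isHomogeneous_iff_degOf.mp hf ν hν))

lemma forall_supported_isHomogeneous_mem_sup_lastVars_iff
    (P : Ideal (MvPolynomial (Fin n) k)) (d r : ℕ) :
    (∀ f ∈ supported k {j : Fin n | (j : ℕ) < n - d}, f.IsHomogeneous r →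
        f ∈ P ⊔ lastVars k n d) ↔
      ∀ f : MvPolynomial (Fin n) k, f.IsHomogeneous r → f ∈ P ⊔ lastVars k n d := by
  refine ⟨fun h => (forall_isHomogeneous_mem_iff _ r).mpr fun μ hμ => ?_,
    fun h f _ => h f⟩
  by_cases hμ' : AvoidsLast d μ
  · exact h _ (monomial_mem_supported hμ' 1) (isHomogeneous_monomial _ hμ)
  · exact Submodule.mem_sup_right (monomial_mem_lastVars hμ' 1)

lemma monomial_mem_of_mem_of_forall_support {P : Ideal (MvPolynomial (Fin n) k)}
    {g : MvPolynomial (Fin n) k} (hg : g ∈ P) {μ : Fin n →₀ ℕ} (hμ : μ ∈ g.support)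
    (h : ∀ ν ∈ g.support, ν ≠ μ → monomial ν (1 : k) ∈ P) : monomial μ (1 : k) ∈ P := by
  have hrest : ∑ ν ∈ g.support.erase μ, monomial ν (coeff ν g) ∈ P := by
    refine Ideal.sum_mem _ fun ν hν => ?_
    rw [← mul_one (coeff ν g), ← C_mul_monomial]
    exact Ideal.mul_mem_left _ _ (h ν (Finset.mem_of_mem_erase hν) (Finset.ne_of_mem_erase hν))
  have hlead : monomial μ (coeff μ g) ∈ P := by
    have hsplit := Finset.add_sum_erase g.support (fun ν => monomial ν (coeff ν g)) hμ
    rw [← g.as_sum] at hsplit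
    rw [eq_sub_of_add_eq hsplit]
    exact sub_mem hg hrest
  have hc : coeff μ g ≠ 0 := mem_support_iff.mp hμ
  rw [← inv_mul_cancel₀ hc, ← C_mul_monomial]
  exact Ideal.mul_mem_left _ _ hlead

variable {I : Ideal (MvPolynomial (Fin n) k)}

lemma monomial_mem_initialIdeal_sup_lastVars (hI : HomogIdeal I) {d : ℕ} {μ : Fin n →₀ ℕ}
    (h : monomial μ (1 : k) ∈ I ⊔ lastVars k n d) :
    monomial μ (1 : k) ∈ initialIdeal I ⊔ lastVars k n d := by
  by_cases hμ : AvoidsLast d μ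
  swap
  · exact Submodule.mem_sup_right (monomial_mem_lastVars hμ 1)
  obtain ⟨g, hg, b, hb, hgb⟩ := Submodule.mem_sup.mp h
  have hcoeff : ∀ ν, AvoidsLast d ν → coeff ν g = coeff ν (monomial μ (1 : k)) := fun ν hν => by
    rw [← hgb, coeff_add, coeff_eq_zero_of_mem_lastVars hb hν, add_zero]
  set g' := homogeneousComponent (degOf μ) g
  have hsupp : ∀ ν, ν ∈ g'.support ↔ ν ∈ g.support ∧ degOf ν = degOf μ := fun ν => by
    rw [support_homogeneousComponent, Finset.mem_filter]; rfl
  have hlead : IsRevLexLeading g' μ := by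
    refine ⟨(hsupp μ).mpr ⟨mem_support_iff.mpr ?_, rfl⟩, fun ν hν => ?_⟩
    · rw [hcoeff μ hμ, coeff_monomial, if_pos rfl]
      exact one_ne_zero (α := k)
    obtain ⟨hνg, hdeg⟩ := (hsupp ν).mp hν
    by_cases hν' : AvoidsLast d ν
    · rw [mem_support_iff, hcoeff ν hν', coeff_monomial] at hνg
      exact Or.inl (by_contra fun hne => hνg (if_neg (Ne.symm hne)))
    · exact Or.inr (RevLexLT.of_avoidsLast hdeg.symm hμ hν')
  exact Submodule.mem_sup_left (hlead.monomial_mem_initialIdeal (hI g hg _))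

lemma monomial_mem_sup_lastVars_of_initialIdeal (hI : HomogIdeal I) {d r : ℕ}
    (h : ∀ μ : Fin n →₀ ℕ, degOf μ = r → monomial μ (1 : k) ∈ initialIdeal I ⊔ lastVars k n d)
    (μ : Fin n →₀ ℕ) (hμ : degOf μ = r) : monomial μ (1 : k) ∈ I ⊔ lastVars k n d := by
  induction μ using RevLexLT.wellFounded.induction with
  | _ μ IH =>
  by_cases hμ' : AvoidsLast d μ
  swap
  · exact Submodule.mem_sup_right (monomial_mem_lastVars hμ' 1)
  obtain ⟨a, ha, b, hb, hab⟩ := Submodule.mem_sup.mp (h μ hμ)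
  have hμa : μ ∈ a.support := by
    have hcoeff := congrArg (coeff μ) hab
    rw [coeff_add, coeff_eq_zero_of_mem_lastVars hb hμ', add_zero, coeff_monomial,
      if_pos rfl] at hcoeff
    exact mem_support_iff.mpr (hcoeff ▸ one_ne_zero)
  obtain ⟨f, hf, ρ, hρ, hρμ⟩ := exists_isRevLexLeading_le_of_mem_initialIdeal ha hμa
  set g := monomial (μ - ρ) (1 : k) * homogeneousComponent (degOf ρ) f
  have hgI : g ∈ I := Ideal.mul_mem_left _ _ (hI f hf _)
  have hglead : IsRevLexLeading g μ := by
    simpa only [g, tsub_add_cancel_of_le hρμ] using hρ.homogeneousComponent.monomial_mul (μ - ρ)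
  have hghom : g.IsHomogeneous r := by
    have hdeg : degOf (μ - ρ) + degOf ρ = r := by rw [← degOf_add, tsub_add_cancel_of_le hρμ, hμ]
    exact hdeg ▸ (isHomogeneous_monomial (1 : k) rfl).mul (homogeneousComponent_isHomogeneous _ f)
  refine monomial_mem_of_mem_of_forall_support (Submodule.mem_sup_left hgI) hglead.1
    fun ν hν hne => IH ν ?_ (isHomogeneous_iff_degOf.mp hghom ν hν)
  exact (hglead.2 ν hν).resolve_left hne

lemma forall_isHomogeneous_mem_sup_lastVars_iff (hI : HomogIdeal I) (d r : ℕ) :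
    (∀ f : MvPolynomial (Fin n) k, f.IsHomogeneous r → f ∈ I ⊔ lastVars k n d) ↔
      ∀ f ∈ supported k {j : Fin n | (j : ℕ) < n - d}, f.IsHomogeneous r → f ∈ Jlow d I := by
  calc (∀ f : MvPolynomial (Fin n) k, f.IsHomogeneous r → f ∈ I ⊔ lastVars k n d)
      ↔ ∀ f : MvPolynomial (Fin n) k, f.IsHomogeneous r →
          f ∈ initialIdeal I ⊔ lastVars k n d := by
        rw [forall_isHomogeneous_mem_iff, forall_isHomogeneous_mem_iff]
        exact ⟨fun h μ hμ => monomial_mem_initialIdeal_sup_lastVars hI (h μ hμ),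
          monomial_mem_sup_lastVars_of_initialIdeal hI⟩
    _ ↔ ∀ f ∈ supported k {j : Fin n | (j : ℕ) < n - d}, f.IsHomogeneous r →
          f ∈ initialIdeal I ⊔ lastVars k n d :=
        (forall_supported_isHomogeneous_mem_sup_lastVars_iff _ d r).symm
    _ ↔ _ := forall₂_congr fun f hf => by rw [Jlow, mem_map_evalZero_iff _ hf]

lemma partIdeal_reverse_X_eq_sup_lastVars (hn : 0 < n) (d : ℕ) :
    partIdeal I (fun j : Fin d => (X ⟨n - 1 - (j : ℕ), by omega⟩ : MvPolynomial (Fin n) k)) d =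
      I ⊔ lastVars k n d := by
  rw [partIdeal, lastVars]
  congr 2
  ext g
  constructor
  · rintro ⟨j, -, rfl⟩
    exact ⟨_, by simp only [Set.mem_ofPred_eq]; omega, rfl⟩
  · rintro ⟨l, hl, rfl⟩
    simp only [Set.mem_ofPred_eq] at hl
    exact ⟨⟨n - 1 - (l : ℕ), by omega⟩, Fin.is_lt _, congrArg X (Fin.ext (by simp only; omega))⟩

/-- Lemma 3.5: if `c_i(I) < ∞` for `i = 0, …, d-1`, then the reduction
number of `S/I` with respect to `z = xₙ, …, x_{n-d+1}`, i.e. the top nonvanishing degree of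
`S/(I, xₙ, …, x_{n-d+1})`, equals `r(I)`, the top nonvanishing degree of `S_d/J_d`. -/
theorem stmt_8 {k : Type*} [Field k] {n : ℕ} (I : Ideal (MvPolynomial (Fin n) k))
    (hI : HomogIdeal I) (d : ℕ) (hn : 0 < n) :
    topDiff ⊤ (partIdeal I (fun j : Fin d =>
        (X ⟨n - 1 - (j : ℕ), by omega⟩ : MvPolynomial (Fin n) k)) d)
      = rInv d I := by
  rw [topDiff, rInv, partIdeal_reverse_X_eq_sup_lastVars hn]
  congr 1
  ext x
  refine exists_congr fun r => and_congr_right fun _ => ?_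
  simp only [Submodule.mem_top, true_iff]
  rw [forall_isHomogeneous_mem_sup_lastVars_iff hI d r]
  simp only [not_forall, exists_prop]
end
end
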